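/- Let K^! be a kernel on ℝ² and let Ψ = Σ_i δ_{(X_i,h_i)} be a point process on ℝ²×(0,∞) whose ground points are (X_i) and whose marks (h_i) are i.i.d. unit-mean exponential, independent of (X_i), such that for every nonnegative measurable f : ℝ²×(0,∞) → [0,∞] for which x ↦ −log ∫_0^∞ e^{−f(x,h)} e^{−h} dh satisfies conditions (a)–(c) with respect to K^!, E[exp(−Σ_i f(X_i,h_i))] = Σ_{n=0}^∞ ((−1)^n/n!) ∫_{(ℝ²)^n} det(K^!(x_i,x_j))_{1≤i,j≤n} Π_{i=1}^n (1 − ∫_0^∞ e^{−f(x_i,h)}e^{−h}dh) dx_1⋯dx_n. Fix r₀ > 0, s ≥ 0, P > 0 and a nonincreasing nonnegative path loss l(x) depending only on ‖x‖, let A be the event that no point X_i lies in the open ball B°(0,r₀) and assume P(A) > 0, and let I = Σ_i P h_i l(X_i) 1{‖X_i‖ ≥ r₀}. Assume that f(x,h) = sPh l(x)1{‖x‖ ≥ r₀} − log 1{‖x‖ ≥ r₀} satisfies the above conditions. Then E[e^{−sI} | A] = [Σ_{n=0}^∞ ((−1)^n/n!) ∫_{(ℝ²)^n} det(K^!(x_i,x_j))_{1≤i,j≤n}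 Π_{i=1}^n (1 − 1{‖x_i‖ ≥ r₀}/(1+sP l(x_i))) dx_1⋯dx_n] / [Σ_{n=0}^∞ ((−1)^n/n!) ∫_{(B(0,r₀))^n} det(K^!(x_i,x_j))_{1≤i,j≤n} dx_1⋯dx_n]. -/

import Mathlib

open MeasureTheory Measure Metric Filter ProbabilityTheory
open scoped ENNReal NNReal Real Topology BigOperators ComplexOrder

noncomputable section

abbrev E2 : Type := EuclideanSpace ℝ (Fin 2)

/-- `expNeg a = e^{-a}` for `a ∈ [0,∞]`, with `expNeg ∞ = 0`. -/
def expNeg (a : ℝ≥0∞) : ℝ := if a = ∞ then 0 else Real.exp (-a.toReal)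

/-- `negLog t = -log t ∈ [0,∞]` for `t ∈ [0,1]`, with `negLog 0 = ∞`. -/
def negLog (t : ℝ) : ℝ≥0∞ := if t = 0 then ∞ else ENNReal.ofReal (-Real.log t)

structure IsKernel (K : E2 → E2 → ℂ) : Prop where
  continuous : Continuous fun p : E2 × E2 => K p.1 p.2
  hermitian : ∀ x y : E2, K y x = starRingEnd ℂ (K x y)
  locSqInt : ∀ s : Set (E2 × E2), IsCompact s →
    IntegrableOn (fun p : E2 × E2 => ‖K p.1 p.2‖ ^ 2) s
  posSemidef : ∀ (n : ℕ) (x : Fin n → E2),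
    (Matrix.of fun i j : Fin n => K (x i) (x j)).PosSemidef

structure SatConds (K : E2 → E2 → ℂ) (f : E2 → ℝ≥0∞) : Prop where
  tendsto_zero : Tendsto f (Bornology.cobounded E2) (nhds 0)
  tail_tendsto_zero : Tendsto
    (fun r : ℝ => ∫⁻ x in (closedBall (0 : E2) r)ᶜ, ENNReal.ofReal (K x x).re * f x)
    atTop (nhds 0)
  finite_integral : ∫⁻ x : E2, ENNReal.ofReal ((K x x).re * (1 - expNeg (f x))) < ∞

def dppTerm (K : E2 → E2 → ℂ) (g : E2 → ℝ) (n : ℕ) : ℂ :=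
  ((-1 : ℂ) ^ n / n.factorial) *
    ∫ x : Fin n → E2,
      (Matrix.of fun i j : Fin n => K (x i) (x j)).det * ∏ i : Fin n, (g (x i) : ℂ)

/-- `∫_{(B(0,r))^n} det(K(x_i,x_j))_{1≤i,j≤n} dx_1⋯dx_n`. -/
def ballDetInt (K : E2 → E2 → ℂ) (r : ℝ) (n : ℕ) : ℂ :=
  ∫ x in Set.univ.pi fun _ : Fin n => closedBall (0 : E2) r,
    (Matrix.of fun i j : Fin n => K (x i) (x j)).det

/-- `∫_0^∞ e^{-f(x,h)} e^{-h} dh`, the average of `e^{-f(x,·)}` over a unit-mean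
exponential mark. -/
def markInt (f : E2 → ℝ → ℝ≥0∞) (x : E2) : ℝ :=
  ∫ t in Set.Ioi (0 : ℝ), expNeg (f x t) * Real.exp (-t)

/-- The marked point process `Σ_i δ_{(X_i,h_i)}` with unit-mean exponential marks
satisfies the marked DPP Laplace identity with kernel `K`. -/
def MarkedDPPLaplace {Ω : Type} [MeasurableSpace Ω] (μ : Measure Ω)
    {I : Type} [Countable I] (X : I → Ω → E2) (h : I → Ω → ℝ)
    (K : E2 → E2 → ℂ) : Prop :=
  ∀ f : E2 → ℝ → ℝ≥0∞, Measurable (fun q : E2 × ℝ => f q.1 q.2) →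
    SatConds K (fun x => negLog (markInt f x)) →
    ((∫ ω, expNeg (∑' i : I, f (X i ω) (h i ω)) ∂μ : ℝ) : ℂ) =
      ∑' n : ℕ, dppTerm K (fun x => 1 - markInt f x) n

/-!
Apply the Laplace identity twice. With `f(x,h) = sPh l(x)` for `‖x‖ ≥ r₀` and `f = ∞` inside the
ball, `e^{-Σ f(X_i,h_i)}` is `e^{-sI}` on the hole event `A` and `0` off it; with `f = 0` for
`‖x‖ ≥ r₀` and `∞` inside, it is `1_A`. The exponential marks average `e^{-f(x,·)}` to
`1{‖x‖ ≥ r₀}/(1 + sP l(x))` and `1{‖x‖ ≥ r₀}`, and in the second expansion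
`1 - 1{‖x‖ ≥ r₀}` is the indicator of the open ball, which differs from the closed one by a null
sphere. Since `-log 1{‖x‖ ≥ r₀} ≤ -log (1{‖x‖ ≥ r₀}/(1 + sP l(x)))`, the second choice inherits
conditions (a)–(c) from the first.
-/

open Set

lemma expNeg_top : expNeg ∞ = 0 := by simp [expNeg]

lemma expNeg_zero : expNeg 0 = 1 := by simp [expNeg]

lemma expNeg_ofReal {a : ℝ} (ha : 0 ≤ a) : expNeg (ENNReal.ofReal a) = Real.exp (-a) := by
  simp [expNeg, ENNReal.toReal_ofReal ha]

lemma expNeg_nonneg (a : ℝ≥0∞) : 0 ≤ expNeg a := by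
  unfold expNeg; split_ifs <;> positivity

lemma expNeg_antitone : Antitone expNeg := by
  intro a b hab
  by_cases hb : b = ∞
  · rw [hb, expNeg_top]; exact expNeg_nonneg a
  · have ha : a ≠ ∞ := ne_top_of_le_ne_top hb hab
    simp only [expNeg, if_neg hb, if_neg ha]
    exact Real.exp_le_exp.mpr (neg_le_neg (ENNReal.toReal_mono hb hab))

lemma negLog_one : negLog 1 = 0 := by simp [negLog]

open Classical in
lemma expNeg_tsum_ite_top {ι : Type*} (p : ι → Prop) [DecidablePred p] (a : ι → ℝ≥0∞) :
    expNeg (∑' i, if p i then a i else ∞) = if ∀ i, p i then expNeg (∑' i, a i) else 0 := by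
  split_ifs with hp
  · simp only [hp, if_true]
  · obtain ⟨i, hi⟩ := not_forall.mp hp
    rw [ENNReal.tsum_eq_top_of_eq_top ⟨i, if_neg hi⟩, expNeg_top]

lemma integral_expNeg_tsum_ite_top {Ω ι : Type*} [MeasurableSpace Ω] (μ : Measure Ω)
    (p : ι → Ω → Prop) [∀ i ω, Decidable (p i ω)] (a : ι → Ω → ℝ≥0∞)
    (hp : MeasurableSet {ω | ∀ i, p i ω}) :
    ∫ ω, expNeg (∑' i, if p i ω then a i ω else ∞) ∂μ =
      ∫ ω in {ω | ∀ i, p i ω}, expNeg (∑' i, a i ω) ∂μ := by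
  classical
  rw [← integral_indicator hp]
  congr with ω
  rw [expNeg_tsum_ite_top, indicator_apply]
  rfl

lemma markInt_ite_top (p : E2 → Prop) [DecidablePred p] (g : E2 → ℝ → ℝ≥0∞) (x : E2) :
    markInt (fun x t => if p x then g x t else ∞) x = if p x then markInt g x else 0 := by
  unfold markInt
  split_ifs with hx <;> simp [hx, expNeg_top]

lemma markInt_zero (x : E2) : markInt (fun _ _ => 0) x = 1 := by
  simp only [markInt, expNeg_zero, one_mul, integral_exp_neg_Ioi_zero]

lemma markInt_ofReal_mul {c : ℝ} {l : E2 → ℝ} {x : E2} (hc : 0 ≤ c * l x) :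
    markInt (fun x t => ENNReal.ofReal (c * t * l x)) x = (1 + c * l x)⁻¹ := by
  have hexp : EqOn (fun t => expNeg (ENNReal.ofReal (c * t * l x)) * Real.exp (-t))
      (fun t => Real.exp (-(1 + c * l x) * t)) (Ioi 0) := fun t (ht : 0 < t) => by
    dsimp only
    rw [expNeg_ofReal (by nlinarith), ← Real.exp_add]
    ring_nf
  rw [markInt, setIntegral_congr_fun measurableSet_Ioi hexp,
    integral_exp_mul_Ioi (by linarith) 0, mul_zero, Real.exp_zero, neg_div_neg_eq, one_div]

lemma IsKernel.re_diag_nonneg {K : E2 → E2 → ℂ} (hK : IsKernel K) (x : E2) :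
    0 ≤ (K x x).re := by
  have h := (hK.posSemidef 1 fun _ => x).dotProduct_mulVec_nonneg fun _ => 1
  simp only [dotProduct, Matrix.mulVec, Fin.sum_univ_one, Matrix.of_apply,
    Pi.star_apply, star_one, one_mul, mul_one] at h
  exact (Complex.le_def.mp h).1

lemma SatConds.mono {K : E2 → E2 → ℂ} {f g : E2 → ℝ≥0∞} (hK : IsKernel K)
    (hf : SatConds K f) (hgf : ∀ x, g x ≤ f x) : SatConds K g where
  tendsto_zero := tendsto_of_tendsto_of_tendsto_of_le_of_le tendsto_const_nhds
    hf.tendsto_zero (fun _ => zero_le) hgf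
  tail_tendsto_zero := tendsto_of_tendsto_of_tendsto_of_le_of_le tendsto_const_nhds
    hf.tail_tendsto_zero (fun _ => zero_le)
    fun _ => lintegral_mono fun x => mul_le_mul_right (hgf x) _
  finite_integral := lt_of_le_of_lt (lintegral_mono fun x => ENNReal.ofReal_le_ofReal <|
      mul_le_mul_of_nonneg_left (sub_le_sub_left (expNeg_antitone (hgf x)) 1)
        (hK.re_diag_nonneg x)) hf.finite_integral

lemma dppTerm_indicator_one (K : E2 → E2 → ℂ) {T : Set E2} (hT : MeasurableSet T) (n : ℕ) :
    dppTerm K (T.indicator 1) n = ((-1 : ℂ) ^ n / n.factorial) *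
      ∫ x in univ.pi fun _ : Fin n => T, (Matrix.of fun i j : Fin n => K (x i) (x j)).det := by
  unfold dppTerm
  rw [← integral_indicator (MeasurableSet.univ_pi fun _ => hT)]
  congr with x
  by_cases hx : x ∈ univ.pi fun _ : Fin n => T
  · rw [indicator_of_mem hx, Finset.prod_eq_one fun i _ => by simp [hx i trivial], mul_one]
  · obtain ⟨i, hi⟩ : ∃ i, x i ∉ T := by simpa [mem_univ_pi] using hx
    rw [indicator_of_notMem hx, Finset.prod_eq_zero (Finset.mem_univ i) (by simp [hi]),
      mul_zero]

lemma ball_ae_eq_closedBall {E : Type*} [NormedAddCommGroup E] [NormedSpace ℝ E]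
    [MeasurableSpace E] [BorelSpace E] [FiniteDimensional ℝ E] [Nontrivial E]
    (μ : Measure E) [μ.IsAddHaarMeasure] (x : E) (r : ℝ) :
    ball x r =ᵐ[μ] closedBall x r := by
  refine ae_eq_set.mpr ⟨by simp [sdiff_eq_empty.mpr ball_subset_closedBall], ?_⟩
  rw [closedBall_sdiff_ball]
  exact Measure.addHaar_sphere μ x r

lemma ballDetInt_eq_setIntegral_ball (K : E2 → E2 → ℂ) (r : ℝ) (n : ℕ) :
    ballDetInt K r n = ∫ x in univ.pi fun _ : Fin n => ball (0 : E2) r,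
      (Matrix.of fun i j : Fin n => K (x i) (x j)).det := by
  refine setIntegral_congr_set ?_
  rw [volume_pi]
  exact (ae_eq_set_pi fun _ _ => ball_ae_eq_closedBall volume 0 r).symm

section MarkedDPP

variable {Ω I : Type} [MeasurableSpace Ω] {μ : Measure Ω} [Countable I]
  {X : I → Ω → E2} {h : I → Ω → ℝ} {K : E2 → E2 → ℂ}

lemma measurableSet_forall_le_norm (hX : ∀ i, Measurable (X i)) (r : ℝ) :
    MeasurableSet {ω | ∀ i, r ≤ ‖X i ω‖} := by
  rw [ofPred_forall]
  exact .iInter fun i => measurableSet_le measurable_const (hX i).norm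

lemma measurableSet_le_norm_fst (r : ℝ) : MeasurableSet {q : E2 × ℝ | r ≤ ‖q.1‖} :=
  measurableSet_le measurable_const measurable_fst.norm

lemma MarkedDPPLaplace.measure_forall_le_norm (hL : MarkedDPPLaplace μ X h K)
    (hX : ∀ i, Measurable (X i)) (r : ℝ)
    (hsat : SatConds K fun x => negLog (if r ≤ ‖x‖ then 1 else 0)) :
    ((μ {ω | ∀ i, r ≤ ‖X i ω‖}).toReal : ℂ) =
      ∑' n : ℕ, ((-1 : ℂ) ^ n / n.factorial) * ballDetInt K r n := by
  have hmark (x : E2) : markInt (fun x (_ : ℝ) => if r ≤ ‖x‖ then 0 else ∞) x =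
      if r ≤ ‖x‖ then 1 else 0 := by
    rw [markInt_ite_top, markInt_zero]
  have hball : (fun x : E2 => 1 - if r ≤ ‖x‖ then (1 : ℝ) else 0) = (ball 0 r).indicator 1 := by
    ext x
    by_cases hx : r ≤ ‖x‖
    · simp [hx]
    · simp [not_le.mp hx]
  have hL₀ := hL (fun x _ => if r ≤ ‖x‖ then 0 else ∞)
    (Measurable.ite (measurableSet_le_norm_fst r) measurable_const measurable_const)
    (by simpa only [hmark] using hsat)
  rw [integral_expNeg_tsum_ite_top μ (fun i ω => r ≤ ‖X i ω‖) (fun _ _ => 0)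
    (measurableSet_forall_le_norm hX r)] at hL₀
  simpa [hmark, hball, dppTerm_indicator_one K measurableSet_ball,
    ← ballDetInt_eq_setIntegral_ball, measureReal_def, expNeg_zero] using hL₀

lemma MarkedDPPLaplace.setIntegral_expNeg_interference (hL : MarkedDPPLaplace μ X h K)
    (hX : ∀ i, Measurable (X i)) {r s P : ℝ} (hs : 0 ≤ s) (hP : 0 ≤ P)
    {l : E2 → ℝ} (hl : Measurable l) (hl₀ : ∀ x, 0 ≤ l x)
    (hsat : SatConds K fun x => negLog (markInt (fun x t =>
      if r ≤ ‖x‖ then ENNReal.ofReal (s * P * t * l x) else ∞) x)) :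
    ((∫ ω in {ω | ∀ i, r ≤ ‖X i ω‖}, expNeg (ENNReal.ofReal s *
        ∑' i, ENNReal.ofReal (if r ≤ ‖X i ω‖ then P * h i ω * l (X i ω) else 0)) ∂μ : ℝ) : ℂ) =
      ∑' n : ℕ, dppTerm K (fun x => 1 - (if r ≤ ‖x‖ then (1 : ℝ) else 0) / (1 + s * P * l x)) n := by
  have hmark (x : E2) : 1 - markInt (fun x t =>
      if r ≤ ‖x‖ then ENNReal.ofReal (s * P * t * l x) else ∞) x =
        1 - (if r ≤ ‖x‖ then (1 : ℝ) else 0) / (1 + s * P * l x) := by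
    rw [markInt_ite_top, markInt_ofReal_mul (mul_nonneg (mul_nonneg hs hP) (hl₀ x))]
    split_ifs <;> simp
  have hA := measurableSet_forall_le_norm hX r
  have hL₁ := hL _ (Measurable.ite (measurableSet_le_norm_fst r) (by fun_prop)
    measurable_const) hsat
  rw [integral_expNeg_tsum_ite_top μ (fun i ω => r ≤ ‖X i ω‖)
    (fun i ω => ENNReal.ofReal (s * P * h i ω * l (X i ω))) hA] at hL₁
  simp only [hmark] at hL₁
  rw [← hL₁, setIntegral_congr_fun hA fun ω hω => ?_]
  simp only [if_pos (hω _), ← ENNReal.tsum_mul_left, ← ENNReal.ofReal_mul hs, mul_assoc]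

end MarkedDPP

theorem stmt_9_general {Ω : Type} [MeasurableSpace Ω] (μ : Measure Ω) [IsProbabilityMeasure μ]
    (K' : E2 → E2 → ℂ) (hK' : IsKernel K')
    (I : Type) [Countable I]
    (X : I → Ω → E2) (h : I → Ω → ℝ)
    (hXmeas : ∀ i, Measurable (X i))
    (hLaplace : MarkedDPPLaplace μ X h K')
    (r₀ s P : ℝ) (hs : 0 ≤ s) (hP : 0 < P)
    (l : E2 → ℝ) (hlmeas : Measurable l) (hlnonneg : ∀ x, 0 ≤ l x)
    (hf₀ : SatConds K' fun x =>
      negLog (markInt (fun x t =>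
        if r₀ ≤ ‖x‖ then ENNReal.ofReal (s * P * t * l x) else ∞) x)) :
    (((∫ ω in {ω | ∀ i : I, X i ω ∉ ball (0 : E2) r₀},
          expNeg (ENNReal.ofReal s *
            ∑' i : I,
              ENNReal.ofReal (if r₀ ≤ ‖X i ω‖ then P * h i ω * l (X i ω) else 0)) ∂μ) /
        (μ {ω | ∀ i : I, X i ω ∉ ball (0 : E2) r₀}).toReal : ℝ) : ℂ) =
      (∑' n : ℕ, dppTerm K'
          (fun x => 1 - (if r₀ ≤ ‖x‖ then (1 : ℝ) else 0) / (1 + s * P * l x)) n) /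
        ∑' n : ℕ, ((-1 : ℂ) ^ n / n.factorial) * ballDetInt K' r₀ n := by
  have hA : {ω | ∀ i : I, X i ω ∉ ball (0 : E2) r₀} = {ω | ∀ i, r₀ ≤ ‖X i ω‖} := by
    simp only [mem_ball_zero_iff, not_lt]
  have hsat : SatConds K' fun x => negLog (if r₀ ≤ ‖x‖ then 1 else 0) :=
    hf₀.mono hK' fun x => by
      rw [markInt_ite_top, markInt_ofReal_mul (mul_nonneg (mul_nonneg hs hP.le) (hlnonneg x))]
      split_ifs <;> simp [negLog_one]
  rw [hA, Complex.ofReal_div,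
    hLaplace.setIntegral_expNeg_interference hXmeas hs hP.le hlmeas hlnonneg hf₀,
    hLaplace.measure_forall_le_norm hXmeas r₀ hsat]

/-- Conditional Laplace transform of the interference: given that no
point lies in the open ball `B°(0,r₀)`,
`E[e^{-sI} | A] = [Σ_n ((-1)^n/n!) ∫_{(ℝ²)^n} det(K^!) ∏ (1 − 1{‖x_i‖≥r₀}/(1+sP l(x_i))) dx]
  / [Σ_n ((-1)^n/n!) ∫_{B(0,r₀)^n} det(K^!) dx]`. -/
theorem stmt_9 {Ω : Type} [MeasurableSpace Ω] (μ : Measure Ω) [IsProbabilityMeasure μ]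
    (K' : E2 → E2 → ℂ) (hK' : IsKernel K')
    (I : Type) [Countable I]
    (X : I → Ω → E2) (h : I → Ω → ℝ)
    (hXmeas : ∀ i, Measurable (X i)) (hhmeas : ∀ i, Measurable (h i))
    (hiid : iIndepFun h μ)
    (hlaw : ∀ i, Measure.map (h i) μ = expMeasure 1)
    (hindep : IndepFun (fun ω (i : I) => X i ω) (fun ω (i : I) => h i ω) μ)
    (hLaplace : MarkedDPPLaplace μ X h K')
    (r₀ s P : ℝ) (hr₀ : 0 < r₀) (hs : 0 ≤ s) (hP : 0 < P)
    (l : E2 → ℝ) (hlmeas : Measurable l) (hlnonneg : ∀ x, 0 ≤ l x)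
    (hlrad : ∀ x y : E2, ‖x‖ ≤ ‖y‖ → l y ≤ l x)
    (hA : 0 < μ {ω | ∀ i : I, X i ω ∉ ball (0 : E2) r₀})
    (hf₀ : SatConds K' fun x =>
      negLog (markInt (fun x t =>
        if r₀ ≤ ‖x‖ then ENNReal.ofReal (s * P * t * l x) else ∞) x)) :
    (((∫ ω in {ω | ∀ i : I, X i ω ∉ ball (0 : E2) r₀},
          expNeg (ENNReal.ofReal s *
            ∑' i : I,
              ENNReal.ofReal (if r₀ ≤ ‖X i ω‖ then P * h i ω * l (X i ω) else 0)) ∂μ) /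
        (μ {ω | ∀ i : I, X i ω ∉ ball (0 : E2) r₀}).toReal : ℝ) : ℂ) =
      (∑' n : ℕ, dppTerm K'
          (fun x => 1 - (if r₀ ≤ ‖x‖ then (1 : ℝ) else 0) / (1 + s * P * l x)) n) /
        ∑' n : ℕ, ((-1 : ℂ) ^ n / n.factorial) * ballDetInt K' r₀ n :=
  stmt_9_general μ K' hK' I X h hXmeas hLaplace r₀ s P hs hP l hlmeas hlnonneg hf₀
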